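/- arXiv:cs/0605070 — 4 statements merged into one kernel-verified Lean document; each statement's English description precedes it below -/
import Mathlib

section
/- Along the linear polygon shortening flow, the quantity H_m(t) = Im((z_{m-1}(t) - z_m(t))·conj(z_{m+1}(t) - z_m(t))) satisfies Ḣ_m = -2H_m + G_m, where G_m = (1/2)·Im((z_{m-2} - z_{m-1})·conj(z_{m+1} - z_m) + (z_{m-1} - z_m)·conj(z_{m+2} - z_{m+1})). -/
open Complex

/-- The centroid of `n` points in the complex plane. -/
noncomputable def centroid (n : ℕ) (z : Fin n → ℂ) : ℂ := (∑ i, z i) / n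

/-- The linear polygon shortening flow: each vertex pursues the centroid of its
two (cyclically) neighbouring vertices. -/
def LinearFlow (n : ℕ) [NeZero n] (z : ℝ → Fin n → ℂ) : Prop :=
  ∀ (t : ℝ) (i : Fin n), HasDerivAt (fun s => z s i)
    ((1/2) * (z t (i + 1) - z t i) + (1/2) * (z t (i - 1) - z t i)) t

open ComplexConjugate

theorem Fin.one_add_one_eq_two (n : ℕ) [NeZero n] : (1 + 1 : Fin n) = 2 := by
  ext
  rw [Fin.val_add, Nat.add_mod]
  simp

theorem HasDerivAt.im_mul_conj {f g : ℝ → ℂ} {f' g' : ℂ} {t : ℝ} (hf : HasDerivAt f f' t)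
    (hg : HasDerivAt g g' t) :
    HasDerivAt (fun s => (f s * conj (g s)).im) (f' * conj (g t) + f t * conj g').im t :=
  imCLM.hasFDerivAt.comp_hasDerivAt t (hf.mul hg.star)

/-- `u' = -u - v/2 + p/2` and `v' = q/2 - v - u/2` are the velocities of the two edge vectors
`u = z_{m-1} - z_m`, `v = z_{m+1} - z_m`, with `p = z_{m-2} - z_{m-1}`, `q = z_{m+2} - z_{m+1}`;
the self-terms `v * conj v` and `u * conj u` are real and drop out of `im`. -/
theorem im_pursuit_identity (u v p q : ℂ) :
    ((-u - v / 2 + p / 2) * conj v + u * conj (q / 2 - v - u / 2)).im =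
      -2 * (u * conj v).im + 1 / 2 * (p * conj v + u * conj q).im := by
  simp only [mul_im, add_im, sub_im, neg_im, div_im, div_re, add_re, sub_re, neg_re,
    conj_re, conj_im]
  norm_num
  ring

theorem H_deriv_general (n : ℕ) [NeZero n]
    (z : ℝ → Fin n → ℂ) (hz : LinearFlow n z) (m : Fin n) (t : ℝ) :
    HasDerivAt
      (fun s => ((z s (m - 1) - z s m) * (starRingEnd ℂ) (z s (m + 1) - z s m)).im)
      (-2 * ((z t (m - 1) - z t m) * (starRingEnd ℂ) (z t (m + 1) - z t m)).im +
        (1/2) * ((z t (m - 2) - z t (m - 1)) * (starRingEnd ℂ) (z t (m + 1) - z t m) +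
          (z t (m - 1) - z t m) * (starRingEnd ℂ) (z t (m + 2) - z t (m + 1))).im)
      t := by
  set u := z t (m - 1) - z t m
  set v := z t (m + 1) - z t m
  have hu : HasDerivAt (fun s => z s (m - 1) - z s m)
      (-u - v / 2 + (z t (m - 2) - z t (m - 1)) / 2) t := by
    refine ((hz t (m - 1)).sub (hz t m)).congr_deriv ?_
    rw [sub_add_cancel, sub_sub, Fin.one_add_one_eq_two]
    ring
  have hv : HasDerivAt (fun s => z s (m + 1) - z s m)
      ((z t (m + 2) - z t (m + 1)) / 2 - v - u / 2) t := by
    refine ((hz t (m + 1)).sub (hz t m)).congr_deriv ?_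
    rw [add_sub_cancel_right, add_assoc, Fin.one_add_one_eq_two]
    ring
  exact (hu.im_mul_conj hv).congr_deriv (im_pursuit_identity ..)

/-- Along the linear polygon shortening flow, the quantity
`H_m(t) = Im((z_{m-1} - z_m)·conj(z_{m+1} - z_m))` satisfies `Ḣ_m = -2 H_m + G_m`, where
`G_m = (1/2)·Im((z_{m-2} - z_{m-1})·conj(z_{m+1} - z_m) + (z_{m-1} - z_m)·conj(z_{m+2} - z_{m+1}))`. -/
theorem H_deriv (n : ℕ) [NeZero n] (hn : 4 ≤ n)
    (z : ℝ → Fin n → ℂ) (hz : LinearFlow n z) (m : Fin n) (t : ℝ) :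
    HasDerivAt
      (fun s => ((z s (m - 1) - z s m) * (starRingEnd ℂ) (z s (m + 1) - z s m)).im)
      (-2 * ((z t (m - 1) - z t m) * (starRingEnd ℂ) (z t (m + 1) - z t m)).im +
        (1/2) * ((z t (m - 2) - z t (m - 1)) * (starRingEnd ℂ) (z t (m + 1) - z t m) +
          (z t (m - 1) - z t m) * (starRingEnd ℂ) (z t (m + 2) - z t (m + 1))).im)
      t :=
  H_deriv_general n z hz m t
end

section
/- If n > 2 distinct points z_1, ..., z_n ∈ ℂ are in a counterclockwise star formation about their centroid, then each of the angles α_i satisfies α_i < π. -/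
open Complex

/-!
Put `w i = z i - z̃`, so that `∑ w i = 0`, and suppose `α k ≥ π`. Measured from `w k`, the
direction of `w (k + m)` is the partial sum `α k + ⋯ + α (k + m - 1)`; these increase strictly
from at least `π` (at `m = 1`) to `2π` (at `m = n`). Hence every `w i` lies in the closed
half-plane `Im (conj (w k) * w) ≤ 0`, and `w (k + 2)` lies in its interior because `n > 2`,
which is incompatible with `∑ w i = 0`.
-/

open Fin.NatCast ComplexConjugate
open scoped Real

lemma sum_sub_centroid (n : ℕ) [NeZero n] (z : Fin n → ℂ) :
    ∑ i, (z i - centroid n z) = 0 := by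
  have hn : (n : ℂ) ≠ 0 := Nat.cast_ne_zero.mpr (NeZero.ne n)
  simp only [Finset.sum_sub_distrib, Finset.sum_const, Finset.card_univ, Fintype.card_fin,
    nsmul_eq_mul, centroid]
  field_simp
  ring

lemma Fin.sum_range_add_left {M : Type*} [AddCommMonoid M] (n : ℕ) [NeZero n]
    (f : Fin n → M) (k : Fin n) :
    ∑ t ∈ Finset.range n, f (k + t) = ∑ i, f i := by
  rw [← Fin.sum_univ_eq_sum_range (fun t => f (k + t)) n]
  simp only [Fin.cast_val_eq_self]
  exact Equiv.sum_comp (Equiv.addLeft k) f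

lemma Real.sin_nonpos_of_pi_le_of_le_two_pi {x : ℝ} (h₁ : π ≤ x) (h₂ : x ≤ 2 * π) :
    Real.sin x ≤ 0 := by
  rw [← Real.sin_sub_two_pi]
  exact Real.sin_nonpos_of_nonpos_of_neg_pi_le (by linarith) (by linarith)

lemma Real.sin_neg_of_pi_lt_of_lt_two_pi {x : ℝ} (h₁ : π < x) (h₂ : x < 2 * π) :
    Real.sin x < 0 := by
  rw [← Real.sin_sub_two_pi]
  exact Real.sin_neg_of_neg_of_neg_pi_lt (by linarith) (by linarith)

lemma im_conj_mul_ofReal_mul_exp_mul (r θ : ℝ) (a : ℂ) :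
    (conj a * (r * exp (θ * I) * a)).im = r * ‖a‖ ^ 2 * Real.sin θ := by
  have h : conj a * (r * exp (θ * I) * a) = (r * ‖a‖ ^ 2 : ℝ) * exp (θ * I) := by
    push_cast
    rw [← Complex.conj_mul']
    ring
  rw [h, im_ofReal_mul, exp_ofReal_mul_I_im]

lemma eq_ofReal_div_mul_exp_mul_of_eq_of_eq {A B C x y : ℝ} (hB : B ≠ 0) {a b c : ℂ}
    (hb : b = (B / A : ℝ) * exp (x * I) * a) (hc : c = (C / B : ℝ) * exp (y * I) * b) :
    c = (C / A : ℝ) * exp ((x + y : ℝ) * I) * a := by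
  have hB' : (B : ℂ) ≠ 0 := by exact_mod_cast hB
  rw [hc, hb]
  push_cast
  rw [add_mul, Complex.exp_add]
  field_simp

lemma eq_ofReal_div_mul_exp_sum_mul_of_succ {v : ℕ → ℂ} {θ : ℕ → ℝ} (hv : ∀ m, v m ≠ 0)
    (hstep : ∀ m, v (m + 1) = (‖v (m + 1)‖ / ‖v m‖ : ℝ) * exp (θ m * I) * v m) (m : ℕ) :
    v m = (‖v m‖ / ‖v 0‖ : ℝ) * exp ((∑ t ∈ Finset.range m, θ t : ℝ) * I) * v 0 := by
  induction m with
  | zero => simp [div_self (norm_ne_zero_iff.mpr (hv 0))]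
  | succ m ih =>
    rw [Finset.sum_range_succ]
    exact eq_ofReal_div_mul_exp_mul_of_eq_of_eq (norm_ne_zero_iff.mpr (hv m)) ih (hstep m)

lemma sum_range_ne_zero_of_strictMono_angle {n : ℕ} (hn : 2 < n) {v : ℕ → ℂ} {β : ℕ → ℝ}
    (hv : ∀ m, v m ≠ 0) (hrot : ∀ m, v m = (‖v m‖ / ‖v 0‖ : ℝ) * exp (β m * I) * v 0)
    (hβ : StrictMono β) (hβ₀ : β 0 = 0) (hβ₁ : π ≤ β 1) (hβn : β n ≤ 2 * π) :
    ∑ m ∈ Finset.range n, v m ≠ 0 := by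
  set g : ℕ → ℝ := fun m => (conj (v 0) * v m).im
  have hg : ∀ m, g m = ‖v m‖ / ‖v 0‖ * ‖v 0‖ ^ 2 * Real.sin (β m) := fun m => by
    simp only [g]
    conv_lhs => rw [hrot m]
    exact im_conj_mul_ofReal_mul_exp_mul _ _ _
  have hcoef : ∀ m, 0 < ‖v m‖ / ‖v 0‖ * ‖v 0‖ ^ 2 := fun m => by
    have := norm_pos_iff.mpr (hv 0)
    have := norm_pos_iff.mpr (hv m)
    positivity
  have hg_nonpos : ∀ m ∈ Finset.range n, g m ≤ 0 := by
    intro m hm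
    rw [hg]
    rcases Nat.eq_zero_or_pos m with rfl | hm₁
    · simp [hβ₀]
    · refine mul_nonpos_of_nonneg_of_nonpos (hcoef m).le
        (Real.sin_nonpos_of_pi_le_of_le_two_pi (hβ₁.trans (hβ.monotone hm₁)) ?_)
      exact (hβ (Finset.mem_range.mp hm)).le.trans hβn
  have hg₂ : g 2 < 0 := by
    rw [hg]
    exact mul_neg_of_pos_of_neg (hcoef 2) (Real.sin_neg_of_pi_lt_of_lt_two_pi
      (hβ₁.trans_lt (hβ one_lt_two)) ((hβ hn).trans_le hβn))
  intro hsum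
  have hgsum : ∑ m ∈ Finset.range n, g m = 0 := by
    simp only [g, ← im_sum, ← Finset.mul_sum, hsum, mul_zero, zero_im]
  exact hg₂.ne
    ((Finset.sum_eq_zero_iff_of_nonpos hg_nonpos).mp hgsum 2 (Finset.mem_range.mpr hn))

theorem star_angles_lt_pi_general (n : ℕ) [NeZero n] (hn : 2 < n)
    (z : Fin n → ℂ)
    (α : Fin n → ℝ)
    (hr : ∀ i, z i ≠ centroid n z)
    (hα : ∀ i, 0 < α i)
    (hsum : (∑ i, α i) = 2 * Real.pi)
    (hrot : ∀ i, z (i + 1) - centroid n z =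
      ((‖z (i + 1) - centroid n z‖ / ‖z i - centroid n z‖ : ℝ) : ℂ) *
        Complex.exp ((α i : ℂ) * Complex.I) * (z i - centroid n z)) :
    ∀ i, α i < Real.pi := by
  intro k
  by_contra! hk
  set v : ℕ → ℂ := fun m => z (k + m) - centroid n z
  set β : ℕ → ℝ := fun m => ∑ t ∈ Finset.range m, α (k + t)
  have hv : ∀ m, v m ≠ 0 := fun m => sub_ne_zero.mpr (hr _)
  have hstep : ∀ m, v (m + 1) = (‖v (m + 1)‖ / ‖v m‖ : ℝ) * exp (α (k + m) * I) * v m := by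
    intro m
    simpa only [v, Nat.cast_succ, ← add_assoc] using hrot (k + m)
  have hβ : StrictMono β := strictMono_nat_of_lt_succ fun m => by
    simpa [β, Finset.sum_range_succ] using hα _
  have hβ₁ : π ≤ β 1 := by simpa [β] using hk
  have hβn : β n = 2 * π := by simp only [β, Fin.sum_range_add_left n α k, hsum]
  have hvsum : ∑ m ∈ Finset.range n, v m = 0 := by
    simp only [v, Fin.sum_range_add_left n (fun i => z i - centroid n z) k, sum_sub_centroid]
  exact sum_range_ne_zero_of_strictMono_angle hn hv
    (eq_ofReal_div_mul_exp_sum_mul_of_succ hv hstep) hβ (Finset.sum_range_zero _) hβ₁ hβn.le hvsum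

/-- If `n > 2` distinct points are in a counterclockwise star formation about their
centroid — i.e. each `rᵢ = |zᵢ - z̃| > 0`, each counterclockwise angle `αᵢ` from ray
`z̃→zᵢ` to ray `z̃→z_{i+1}` is positive, and `∑ αᵢ = 2π` — then every `αᵢ < π`. -/
theorem star_angles_lt_pi (n : ℕ) [NeZero n] (hn : 2 < n)
    (z : Fin n → ℂ) (hdist : ∀ i j : Fin n, i ≠ j → z i ≠ z j)
    (α : Fin n → ℝ)
    (hr : ∀ i, z i ≠ centroid n z)
    (hα : ∀ i, 0 < α i)
    (hsum : (∑ i, α i) = 2 * Real.pi)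
    (hrot : ∀ i, z (i + 1) - centroid n z =
      ((‖z (i + 1) - centroid n z‖ / ‖z i - centroid n z‖ : ℝ) : ℂ) *
        Complex.exp ((α i : ℂ) * Complex.I) * (z i - centroid n z)) :
    ∀ i, α i < Real.pi :=
  star_angles_lt_pi_general n hn z α hr hα hsum hrot
end

section
/- If an n-gon is strictly convex at t = 0, with vertices numbered counterclockwise, and its vertices evolve according to ż_i = (1/2)(z_{i+1} - z_i) + (1/2)(z_{i-1} - z_i), then the n-gon remains strictly convex for all t ≥ 0. -/
/-!
Write `area p q r` for twice the signed area of the triangle `p q r`. A counterclockwise strictly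
convex polygon has positive `area` on every triple of vertices in cyclic order: seen from a fixed
vertex, all others lie to the left of the first edge, within that half-plane "turning left" is
transitive, and consecutive vertices always turn left.

Since `area` is affine in each vertex and the flow moves each vertex towards the midpoint of its
neighbours, `d/dt A(a,b,c) = ½ ΣA' - 3 A(a,b,c)`, where `A'` runs over the six triangles
obtained by moving one vertex to a neighbour; these are again cyclically ordered or degenerate.
So while all cyclically ordered areas are positive, each satisfies `A' ≥ -3A`; hence `A e^{3t}`
cannot reach zero and positivity persists.
-/

open Complex

/-- The `n`-gon with distinct vertices `z 0, …, z (n-1)`, numbered counterclockwise,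
is strictly convex: every vertex lies strictly to the left of every directed edge
`z i → z (i+1)`. -/
def StrictlyConvexCCW (n : ℕ) [NeZero n] (z : Fin n → ℂ) : Prop :=
  (∀ i j : Fin n, i ≠ j → z i ≠ z j) ∧
  ∀ i j : Fin n, j ≠ i → j ≠ i + 1 →
    0 < ((starRingEnd ℂ) (z (i + 1) - z i) * (z j - z i)).im

def area (p q r : ℂ) : ℝ := ((starRingEnd ℂ) (q - p) * (r - p)).im

lemma area_eq (p q r : ℂ) :
    area p q r = (q.re - p.re) * (r.im - p.im) - (q.im - p.im) * (r.re - p.re) := by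
  simp only [area, mul_im, conj_re, conj_im, sub_re, sub_im]; ring

@[simp] lemma area_self_left (p r : ℂ) : area p p r = 0 := by simp [area]
@[simp] lemma area_self_right (p q : ℂ) : area p q q = 0 := by simp only [area_eq]; ring
@[simp] lemma area_self_outer (p q : ℂ) : area p q p = 0 := by simp [area]

lemma area_rotate (p q r : ℂ) : area q r p = area p q r := by simp only [area_eq]; ring

lemma area_pos_trans {p w q r s : ℂ} (hq : 0 < area p w q) (hr : 0 < area p w r)
    (hs : 0 < area p w s) (hqr : 0 < area p q r) (hrs : 0 < area p r s) : 0 < area p q s := by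
  have key : area p q r * area p w s + area p r s * area p w q
      = area p q s * area p w r := by
    simp only [area_eq]; ring
  have := mul_pos hqr hs
  have := mul_pos hrs hq
  nlinarith

lemma HasDerivAt.area {p q r : ℝ → ℂ} {p' q' r' : ℂ} {t : ℝ} (hp : HasDerivAt p p' t)
    (hq : HasDerivAt q q' t) (hr : HasDerivAt r r' t) :
    HasDerivAt (fun s => area (p s) (q s) (r s))
      (((starRingEnd ℂ) (q' - p') * (r t - p t) + (starRingEnd ℂ) (q t - p t) * (r' - p')).im) t :=
  (imCLM.hasFDerivAt).comp_hasDerivAt t (((hq.sub hp).star).mul (hr.sub hp))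

lemma LinearFlow.hasDerivAt_area {n : ℕ} [NeZero n] {z : ℝ → Fin n → ℂ} (hz : LinearFlow n z)
    (a b c : Fin n) (t : ℝ) :
    HasDerivAt (fun s => area (z s a) (z s b) (z s c))
      ((area (z t (a + 1)) (z t b) (z t c) + area (z t (a - 1)) (z t b) (z t c)
        + area (z t a) (z t (b + 1)) (z t c) + area (z t a) (z t (b - 1)) (z t c)
        + area (z t a) (z t b) (z t (c + 1)) + area (z t a) (z t b) (z t (c - 1))) / 2
        - 3 * area (z t a) (z t b) (z t c)) t := by
  refine ((hz t a).area (hz t b) (hz t c)).congr_deriv ?_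
  simp only [area_eq, mul_im, mul_re, conj_re, conj_im, sub_re, sub_im, add_re, add_im]
  norm_num
  ring

theorem Set.Finite.forall_pos_of_deriv_ge {ι : Type*} {s : Set ι} (hs : s.Finite)
    {f : ι → ℝ → ℝ} (c : ℝ) (hf : ∀ i ∈ s, Differentiable ℝ (f i))
    (hf' : ∀ t, (∀ i ∈ s, 0 < f i t) → ∀ i ∈ s, c * f i t ≤ deriv (f i) t)
    (h0 : ∀ i ∈ s, 0 < f i 0) {t : ℝ} (ht : 0 ≤ t) : ∀ i ∈ s, 0 < f i t := by
  by_contra! hbad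
  set bad := Set.Ici 0 ∩ ⋃ i ∈ s, {t | f i t ≤ 0}
  have hclosed : IsClosed bad := isClosed_Ici.inter <| hs.isClosed_biUnion fun i hi =>
    isClosed_le (hf i hi).continuous continuous_const
  have hbdd : BddBelow bad := ⟨0, fun _ h => h.1⟩
  have hne : bad.Nonempty := by
    obtain ⟨i, hi, h⟩ := hbad
    exact ⟨t, ht, Set.mem_biUnion hi h⟩
  obtain ⟨ht₀, hfail⟩ := hclosed.csInf_mem hne hbdd
  set t₀ := sInf bad
  obtain ⟨i, hi, hfi⟩ := Set.mem_iUnion₂.1 hfail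
  have hbefore : ∀ τ, 0 ≤ τ → τ < t₀ → ∀ j ∈ s, 0 < f j τ := fun τ hτ hτt₀ j hj => by
    by_contra! h
    exact (csInf_le hbdd ⟨hτ, Set.mem_biUnion hj h⟩).not_gt hτt₀
  have hg : ∀ τ, HasDerivAt (fun τ => f i τ * Real.exp (-c * τ))
      (deriv (f i) τ * Real.exp (-c * τ) + f i τ * (Real.exp (-c * τ) * -c)) τ := fun τ =>
    (hf i hi τ).hasDerivAt.mul ((hasDerivAt_id τ).const_mul (-c) |>.exp |>.congr_deriv (by simp))
  have hmono : MonotoneOn (fun τ => f i τ * Real.exp (-c * τ)) (Set.Icc 0 t₀) := by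
    refine monotoneOn_of_deriv_nonneg (convex_Icc 0 t₀)
      (fun τ _ => (hg τ).continuousAt.continuousWithinAt)
      (fun τ _ => (hg τ).differentiableAt.differentiableWithinAt) fun τ hτ => ?_
    rw [interior_Icc] at hτ
    rw [(hg τ).deriv]
    have := hf' τ (hbefore τ hτ.1.le hτ.2) i hi
    have := Real.exp_pos (-c * τ)
    nlinarith
  have hle : f i 0 ≤ f i t₀ * Real.exp (-c * t₀) := by
    simpa using hmono ⟨le_rfl, ht₀⟩ ⟨ht₀, le_rfl⟩ ht₀
  have := mul_nonpos_of_nonpos_of_nonneg hfi (Real.exp_pos (-c * t₀)).le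
  linarith [h0 i hi]

section CyclicTriangles

open Fin.CommRing

variable {n : ℕ} [NeZero n] {z : Fin n → ℂ}

lemma Fin.add_natCast_ne_self (a : Fin n) {k : ℕ} (h0 : 0 < k) (hk : k < n) : a + k ≠ a := by
  intro h
  have : ((k : ℕ) : Fin n) = 0 := by simpa using h
  exact Nat.not_dvd_of_pos_of_lt h0 hk (Fin.natCast_eq_zero.1 this)

/-- `(a, a + i, a + j)` with `0 < i < j < n` runs over the vertex triples in counterclockwise
cyclic order. -/
def CCWTriangles (n : ℕ) [NeZero n] (z : Fin n → ℂ) : Prop :=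
  ∀ (a : Fin n) (i j : ℕ), 0 < i → i < j → j < n → 0 < area (z a) (z (a + i)) (z (a + j))

theorem StrictlyConvexCCW.ccwTriangles (h : StrictlyConvexCCW n z) : CCWTriangles n z := by
  intro a i j hi hij hj
  have edge : ∀ k : ℕ, 2 ≤ k → k < n → 0 < area (z a) (z (a + 1)) (z (a + k)) := by
    intro k hk hkn
    refine h.2 a (a + k) (Fin.add_natCast_ne_self a (by omega) hkn) ?_
    rw [show (a + k : Fin n) = a + 1 + ((k - 1 : ℕ) : Fin n) by
      rw [Nat.cast_sub (by omega)]; push_cast; ring]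
    exact Fin.add_natCast_ne_self _ (by omega) (by omega)
  have step : ∀ k : ℕ, 1 ≤ k → k + 1 < n →
      0 < area (z a) (z (a + k)) (z (a + (k + 1 : ℕ))) := by
    intro k hk hkn
    rw [← area_rotate, Nat.cast_succ, ← add_assoc]
    refine h.2 (a + k) a (Fin.add_natCast_ne_self a hk (by omega)).symm ?_
    rw [add_assoc, ← Nat.cast_succ]
    exact (Fin.add_natCast_ne_self a (by omega) hkn).symm
  obtain rfl | hi2 : i = 1 ∨ 2 ≤ i := by omega
  · simpa using edge j (by omega) hj
  · induction j, hij using Nat.le_induction with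
    | base => exact step i (by omega) hj
    | succ j hij ih =>
      exact area_pos_trans (edge i hi2 (by omega)) (edge j (by omega) (by omega))
        (edge (j + 1) (by omega) hj) (ih (by omega)) (step j (by omega) hj)

lemma CCWTriangles.area_nonneg (h : CCWTriangles n z) {a b c : Fin n} (i j : ℕ)
    (hb : b = a + i) (hc : c = a + j) (hij : i ≤ j) (hj : j ≤ n) :
    0 ≤ area (z a) (z b) (z c) := by
  subst hb hc
  rcases Nat.eq_zero_or_pos i with rfl | hi
  · simp
  rcases hij.eq_or_lt with rfl | hij
  · simp
  rcases hj.eq_or_lt with rfl | hj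
  · simp
  exact (h a i j hi hij hj).le

lemma CCWTriangles.shifted_areas_nonneg (h : CCWTriangles n z) (a : Fin n) {i j : ℕ}
    (hi : 0 < i) (hij : i < j) (hj : j < n) :
    0 ≤ area (z (a + 1)) (z (a + i)) (z (a + j)) + area (z (a - 1)) (z (a + i)) (z (a + j))
      + area (z a) (z (a + i + 1)) (z (a + j)) + area (z a) (z (a + i - 1)) (z (a + j))
      + area (z a) (z (a + i)) (z (a + j + 1)) + area (z a) (z (a + i)) (z (a + j - 1)) := by
  have h₁ : 0 ≤ area (z (a + 1)) (z (a + i)) (z (a + j)) := h.area_nonneg (i - 1) (j - 1)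
    (by rw [Nat.cast_sub (by omega)]; ring) (by rw [Nat.cast_sub (by omega)]; ring)
    (by omega) (by omega)
  have h₂ : 0 ≤ area (z (a - 1)) (z (a + i)) (z (a + j)) := h.area_nonneg (i + 1) (j + 1)
    (by push_cast; ring) (by push_cast; ring) (by omega) (by omega)
  have h₃ : 0 ≤ area (z a) (z (a + i + 1)) (z (a + j)) := h.area_nonneg (i + 1) j
    (by push_cast; ring) rfl (by omega) (by omega)
  have h₄ : 0 ≤ area (z a) (z (a + i - 1)) (z (a + j)) := h.area_nonneg (i - 1) j
    (by rw [Nat.cast_sub (by omega)]; ring) rfl (by omega) (by omega)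
  have h₅ : 0 ≤ area (z a) (z (a + i)) (z (a + j + 1)) := h.area_nonneg i (j + 1)
    rfl (by push_cast; ring) (by omega) (by omega)
  have h₆ : 0 ≤ area (z a) (z (a + i)) (z (a + j - 1)) := h.area_nonneg i (j - 1)
    rfl (by rw [Nat.cast_sub (by omega)]; ring) (by omega) (by omega)
  linarith

theorem LinearFlow.ccwTriangles {z : ℝ → Fin n → ℂ} (hz : LinearFlow n z)
    (h₀ : CCWTriangles n (z 0)) {t : ℝ} (ht : 0 ≤ t) : CCWTriangles n (z t) := by
  let triples : Set (Fin n × ℕ × ℕ) := {p | 0 < p.2.1 ∧ p.2.1 < p.2.2 ∧ p.2.2 < n}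
  have hfin : triples.Finite :=
    (Set.finite_univ.prod ((Set.finite_Iio n).prod (Set.finite_Iio n))).subset
      fun _ hp => ⟨trivial, hp.2.1.trans hp.2.2, hp.2.2⟩
  have hderiv (p : Fin n × ℕ × ℕ) (s : ℝ) :=
    hz.hasDerivAt_area p.1 (p.1 + p.2.1) (p.1 + p.2.2) s
  have key := hfin.forall_pos_of_deriv_ge
    (f := fun p s => area (z s p.1) (z s (p.1 + p.2.1)) (z s (p.1 + p.2.2))) (-3)
    (fun p _ s => (hderiv p s).differentiableAt) ?_
    (fun p hp => h₀ p.1 p.2.1 p.2.2 hp.1 hp.2.1 hp.2.2) ht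
  · exact fun a i j hi hij hj => key (a, i, j) ⟨hi, hij, hj⟩
  · intro s hs p hp
    rw [(hderiv p s).deriv]
    have := CCWTriangles.shifted_areas_nonneg (z := z s)
      (fun a i j hi hij hj => hs (a, i, j) ⟨hi, hij, hj⟩) p.1 hp.1 hp.2.1 hp.2.2
    linarith

theorem CCWTriangles.strictlyConvexCCW (hn : 3 ≤ n) (h : CCWTriangles n z) :
    StrictlyConvexCCW n z := by
  have hoffset (i j : Fin n) : j = i + ((j - i : Fin n) : ℕ) := by simp
  have edge (i j : Fin n) (hd : 2 ≤ (j - i : Fin n).val) : 0 < area (z i) (z (i + 1)) (z j) := by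
    rw [hoffset i j]
    simpa using h i 1 _ one_pos hd (j - i).isLt
  refine ⟨fun i j hij hzij => ?_, fun i j hji hji1 => edge i j ?_⟩
  · obtain hd | hd : (j - i : Fin n).val = 1 ∨ 2 ≤ (j - i : Fin n).val := by
      have : (j - i : Fin n).val ≠ 0 := fun h0 => hij (by simpa [h0] using (hoffset i j).symm)
      omega
    · have := h i 1 2 one_pos one_lt_two hn
      rw [hoffset i j, hd] at hzij
      simp_all
    · simpa [hzij] using edge i j hd
  · have h0 : (j - i : Fin n).val ≠ 0 := fun h0 => hji (by simpa [h0] using hoffset i j)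
    have h1 : (j - i : Fin n).val ≠ 1 := fun h1 => hji1 (by simpa [h1] using hoffset i j)
    omega

end CyclicTriangles

/-- A strictly convex `n`-gon (vertices numbered counterclockwise) evolving under the
linear polygon shortening flow remains strictly convex for all `t ≥ 0`. -/
theorem convex_stays_convex (n : ℕ) [NeZero n] (hn : 3 ≤ n)
    (z : ℝ → Fin n → ℂ) (hz : LinearFlow n z)
    (hconv : StrictlyConvexCCW n (z 0)) :
    ∀ t : ℝ, 0 ≤ t → StrictlyConvexCCW n (z t) :=
  fun _ ht => (hz.ccwTriangles hconv.ccwTriangles ht).strictlyConvexCCW hn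
end

section
/- Consider an n-gon with distinct adjacent vertices evolving under ż_i = (1/2)(z_{i+1} - z_i) + (1/2)(z_{i-1} - z_i). At any time at which adjacent vertices are distinct, the perimeter P(t) = ∑|z_{i+1} - z_i| satisfies Ṗ(t) < 0; if adjacent vertices remain distinct for all time, P(t) is strictly monotonically decreasing and tends to 0 as t → ∞. -/
/-!
Let `v i = z (i + 1) - z i` be the edges. They evolve by the same discrete Laplacian as the
vertices and sum to zero. By Cauchy–Schwarz, `d‖v i‖/dt = ⟪v i, Δ v i⟫ / ‖v i‖` is at most
`‖v (i + 1)‖ / 2 + ‖v (i - 1)‖ / 2 - ‖v i‖`, and these bounds sum to zero; equality at every `i`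
would make all edges point the same way, impossible for a closed polygon.

For the limit, summation by parts gives `d/dt ∑ ‖v i‖² = -∑ ‖v (i + 1) - v i‖²`, and a discrete
Poincaré inequality for zero-sum sequences bounds `∑ ‖v i‖²` by `n² ∑ ‖v (i + 1) - v i‖²`, so the
edge energy decays exponentially.
-/

open Complex

open scoped RealInnerProductSpace
open Finset Filter Topology

theorem HasDerivAt.norm {E : Type*} [NormedAddCommGroup E] [InnerProductSpace ℝ E]
    {f : ℝ → E} {f' : E} {x : ℝ} (hf : HasDerivAt f f' x) (h0 : f x ≠ 0) :
    HasDerivAt (fun s => ‖f s‖) (⟪f x, f'⟫ / ‖f x‖) x := by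
  have hpos : 0 < ‖f x‖ := norm_pos_iff.mpr h0
  have h := (Real.hasDerivAt_sqrt (by positivity : ‖f x‖ ^ 2 ≠ 0)).comp x hf.norm_sq
  simp only [Function.comp_def, Real.sqrt_sq (norm_nonneg _)] at h
  exact h.congr_deriv (by field_simp)

theorem tendsto_zero_of_hasDerivAt_le_neg_mul {Q Q' : ℝ → ℝ} {c : ℝ}
    (hQ : ∀ t, HasDerivAt Q (Q' t) t) (hQ' : ∀ t, Q' t ≤ -c * Q t) (hc : 0 < c)
    (hQ0 : ∀ t, 0 ≤ Q t) : Tendsto Q atTop (𝓝 0) := by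
  have hbound : ∀ t ≥ 0, Q t ≤ Q 0 * Real.exp (-c * t) := by
    intro t ht
    have := le_gronwallBound_of_liminf_deriv_right_le (K := -c) (ε := 0) (a := 0) (b := t)
      (fun x _ => (hQ x).continuousAt.continuousWithinAt)
      (fun x _ _ hr => (hQ x).hasDerivWithinAt.liminf_right_slope_le hr) le_rfl
      (fun x _ => by simpa using hQ' x) t ⟨ht, le_rfl⟩
    simpa [gronwallBound_ε0] using this
  have hexp : Tendsto (fun t => Q 0 * Real.exp (-c * t)) atTop (𝓝 0) := by
    simpa using (Real.tendsto_exp_atBot.comp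
      (tendsto_id.const_mul_atTop_of_neg (neg_lt_zero.mpr hc))).const_mul (Q 0)
  exact squeeze_zero' (Eventually.of_forall hQ0) (eventually_atTop.mpr ⟨0, hbound⟩) hexp

section Cyclic

open Fin.NatCast

variable {n : ℕ} [NeZero n]

theorem Fin.sum_comp_add_one {M : Type*} [AddCommMonoid M] (f : Fin n → M) :
    ∑ i, f (i + 1) = ∑ i, f i :=
  Fintype.sum_equiv (Equiv.addRight 1) _ _ fun _ => rfl

theorem Fin.sum_comp_sub_one {M : Type*} [AddCommMonoid M] (f : Fin n → M) :
    ∑ i, f (i - 1) = ∑ i, f i := by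
  rw [← Fin.sum_comp_add_one]
  simp

theorem Fin.apply_eq_apply_zero_of_forall_apply_add_one {α : Type*} {f : Fin n → α}
    (h : ∀ i, f (i + 1) = f i) (i : Fin n) : f i = f 0 := by
  suffices ∀ m : ℕ, f m = f 0 by simpa using this i.val
  intro m
  induction m with
  | zero => simp
  | succ m ih => rw [Nat.cast_succ, h, ih]

def cyclicDiff {M : Type*} [AddCommGroup M] (w : Fin n → M) (i : Fin n) : M := w (i + 1) - w i

noncomputable def cyclicLaplacian {E : Type*} [AddCommGroup E] [Module ℝ E] (w : Fin n → E)
    (i : Fin n) : E :=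
  (1/2 : ℝ) • (w (i + 1) - w i) + (1/2 : ℝ) • (w (i - 1) - w i)

def perimeter {E : Type*} [SeminormedAddCommGroup E] (w : Fin n → E) : ℝ := ∑ i, ‖cyclicDiff w i‖

theorem sum_cyclicDiff {M : Type*} [AddCommGroup M] (w : Fin n → M) : ∑ i, cyclicDiff w i = 0 := by
  simp only [cyclicDiff, sum_sub_distrib, Fin.sum_comp_add_one w, sub_self]

theorem cyclicDiff_cyclicLaplacian {E : Type*} [AddCommGroup E] [Module ℝ E] (w : Fin n → E) :
    cyclicDiff (cyclicLaplacian w) = cyclicLaplacian (cyclicDiff w) := by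
  ext i
  simp only [cyclicDiff, cyclicLaplacian, add_sub_cancel_right, sub_add_cancel]
  module

theorem norm_sub_le_sum_norm_cyclicDiff {E : Type*} [SeminormedAddCommGroup E] (w : Fin n → E)
    (i j : Fin n) : ‖w j - w i‖ ≤ ∑ k, ‖cyclicDiff w k‖ := by
  have partial_sum : ∀ m : ℕ, ‖w (i + m) - w i‖ ≤ ∑ l ∈ range m, ‖cyclicDiff w (i + l)‖ := by
    intro m
    induction m with
    | zero => simp
    | succ m ih =>
      rw [sum_range_succ, Nat.cast_succ, ← add_assoc]
      calc ‖w (i + m + 1) - w i‖ = ‖(w (i + m) - w i) + cyclicDiff w (i + m)‖ := by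
            rw [cyclicDiff]; abel_nf
        _ ≤ _ := (norm_add_le _ _).trans (by gcongr)
  have full_sum : ∑ l ∈ range n, ‖cyclicDiff w (i + l)‖ = ∑ k, ‖cyclicDiff w k‖ := by
    rw [← Fin.sum_univ_eq_sum_range (fun l => ‖cyclicDiff w (i + l)‖)]
    simp only [Fin.cast_val_eq_self]
    exact Equiv.sum_comp (Equiv.addLeft i) (fun k => ‖cyclicDiff w k‖)
  calc ‖w j - w i‖ = ‖w (i + (j - i).val) - w i‖ := by simp
    _ ≤ ∑ l ∈ range (j - i).val, ‖cyclicDiff w (i + l)‖ := partial_sum _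
    _ ≤ ∑ l ∈ range n, ‖cyclicDiff w (i + l)‖ :=
        sum_le_sum_of_subset_of_nonneg (range_subset_range.mpr (j - i).isLt.le)
          fun _ _ _ => norm_nonneg _
    _ = _ := full_sum

variable {E : Type*} [NormedAddCommGroup E] [NormedSpace ℝ E]

theorem norm_le_sum_norm_cyclicDiff {w : Fin n → E} (hw : ∑ i, w i = 0) (i : Fin n) :
    ‖w i‖ ≤ ∑ k, ‖cyclicDiff w k‖ := by
  have hsum : n • w i = ∑ j, (w i - w j) := by simp [sum_sub_distrib, hw]
  have hn : (0 : ℝ) < n := by exact_mod_cast Nat.pos_of_neZero n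
  refine le_of_mul_le_mul_left ?_ hn
  calc (n : ℝ) * ‖w i‖ = ‖n • w i‖ := by rw [RCLike.norm_nsmul ℝ, nsmul_eq_mul]
    _ ≤ ∑ j, ‖w i - w j‖ := hsum ▸ norm_sum_le _ _
    _ ≤ ∑ _j : Fin n, ∑ k, ‖cyclicDiff w k‖ :=
        sum_le_sum fun j _ => norm_sub_rev (w i) (w j) ▸ norm_sub_le_sum_norm_cyclicDiff w i j
    _ = n * ∑ k, ‖cyclicDiff w k‖ := by simp

theorem sum_norm_sq_le_of_sum_eq_zero {w : Fin n → E} (hw : ∑ i, w i = 0) :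
    ∑ i, ‖w i‖ ^ 2 ≤ (n : ℝ) ^ 2 * ∑ k, ‖cyclicDiff w k‖ ^ 2 := by
  have hCS : (∑ k, ‖cyclicDiff w k‖) ^ 2 ≤ n * ∑ k, ‖cyclicDiff w k‖ ^ 2 := by
    simpa using sq_sum_le_card_mul_sum_sq (s := univ) (f := fun k => ‖cyclicDiff w k‖)
  calc ∑ i, ‖w i‖ ^ 2 ≤ ∑ _i : Fin n, (∑ k, ‖cyclicDiff w k‖) ^ 2 :=
        sum_le_sum fun i _ => pow_le_pow_left₀ (norm_nonneg _) (norm_le_sum_norm_cyclicDiff hw i) 2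
    _ = n * (∑ k, ‖cyclicDiff w k‖) ^ 2 := by simp
    _ ≤ n * (n * ∑ k, ‖cyclicDiff w k‖ ^ 2) := by gcongr
    _ = _ := by ring

end Cyclic

section InnerProduct

variable {n : ℕ} [NeZero n] {E : Type*} [NormedAddCommGroup E] [InnerProductSpace ℝ E]

theorem exists_inner_lt_norm_mul_norm {w : Fin n → E} (hw : ∀ i, w i ≠ 0)
    (hs : ∑ i, w i = 0) : ∃ i, ⟪w i, w (i + 1)⟫ < ‖w i‖ * ‖w (i + 1)‖ := by
  by_contra! h
  set u : Fin n → E := fun i => ‖w i‖⁻¹ • w i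
  have hu : ∀ i, u (i + 1) = u i := by
    intro i
    have hpar := inner_eq_norm_mul_iff_real.mp (le_antisymm (real_inner_le_norm _ _) (h i))
    have hi := norm_ne_zero_iff.mpr (hw i)
    have hi' := norm_ne_zero_iff.mpr (hw (i + 1))
    simp only [u]
    rw [inv_smul_eq_iff₀ hi', smul_comm, hpar, inv_smul_smul₀ hi]
  have hw_eq : ∀ i, w i = ‖w i‖ • u 0 := by
    intro i
    rw [← Fin.apply_eq_apply_zero_of_forall_apply_add_one hu i,
      smul_inv_smul₀ (norm_ne_zero_iff.mpr (hw i))]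
  have hpos : 0 < ∑ i, ‖w i‖ :=
    sum_pos (fun i _ => norm_pos_iff.mpr (hw i)) univ_nonempty
  have hu0 : u 0 ≠ 0 := smul_ne_zero (inv_ne_zero (norm_ne_zero_iff.mpr (hw 0))) (hw 0)
  rw [sum_congr rfl fun i _ => hw_eq i, ← sum_smul] at hs
  exact hu0 ((smul_eq_zero.mp hs).resolve_left hpos.ne')

theorem inner_cyclicLaplacian (v : Fin n → E) (i : Fin n) :
    ⟪v i, cyclicLaplacian v i⟫ =
      (1/2) * ⟪v i, v (i + 1)⟫ + (1/2) * ⟪v i, v (i - 1)⟫ - ‖v i‖ ^ 2 := by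
  simp only [cyclicLaplacian, inner_add_right, inner_smul_right, inner_sub_right,
    real_inner_self_eq_norm_sq]
  ring

theorem inner_cyclicLaplacian_div_norm_le {v : Fin n → E} {i : Fin n} (hv : v i ≠ 0) :
    ⟪v i, cyclicLaplacian v i⟫ / ‖v i‖ ≤ (1/2) * ‖v (i + 1)‖ + (1/2) * ‖v (i - 1)‖ - ‖v i‖ := by
  rw [div_le_iff₀ (norm_pos_iff.mpr hv), inner_cyclicLaplacian]
  linarith [real_inner_le_norm (v i) (v (i + 1)), real_inner_le_norm (v i) (v (i - 1))]

theorem inner_cyclicLaplacian_div_norm_lt {v : Fin n → E} {i : Fin n} (hv : v i ≠ 0)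
    (hlt : ⟪v i, v (i + 1)⟫ < ‖v i‖ * ‖v (i + 1)‖) :
    ⟪v i, cyclicLaplacian v i⟫ / ‖v i‖ < (1/2) * ‖v (i + 1)‖ + (1/2) * ‖v (i - 1)‖ - ‖v i‖ := by
  rw [div_lt_iff₀ (norm_pos_iff.mpr hv), inner_cyclicLaplacian]
  linarith [real_inner_le_norm (v i) (v (i - 1))]

theorem sum_inner_cyclicLaplacian_div_norm_neg {v : Fin n → E} (hv : ∀ i, v i ≠ 0)
    (hs : ∑ i, v i = 0) : ∑ i, ⟪v i, cyclicLaplacian v i⟫ / ‖v i‖ < 0 := by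
  obtain ⟨i₀, hi₀⟩ := exists_inner_lt_norm_mul_norm hv hs
  calc ∑ i, ⟪v i, cyclicLaplacian v i⟫ / ‖v i‖
      < ∑ i, ((1/2) * ‖v (i + 1)‖ + (1/2) * ‖v (i - 1)‖ - ‖v i‖) :=
        sum_lt_sum (fun i _ => inner_cyclicLaplacian_div_norm_le (hv i))
          ⟨i₀, mem_univ _, inner_cyclicLaplacian_div_norm_lt (hv i₀) hi₀⟩
    _ = 0 := by
        simp only [sum_sub_distrib, sum_add_distrib, ← mul_sum, Fin.sum_comp_add_one (‖v ·‖),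
          Fin.sum_comp_sub_one (‖v ·‖)]
        ring

theorem sum_inner_cyclicLaplacian (v : Fin n → E) :
    ∑ i, ⟪v i, cyclicLaplacian v i⟫ = -(1/2) * ∑ i, ‖cyclicDiff v i‖ ^ 2 := by
  have hshift : ∑ i, ⟪v i, v (i - 1)⟫ = ∑ i, ⟪v (i + 1), v i⟫ := by
    rw [← Fin.sum_comp_add_one]
    simp
  have hcomm : ∑ i, ⟪v (i + 1), v i⟫ = ∑ i, ⟪v i, v (i + 1)⟫ :=
    sum_congr rfl fun i _ => real_inner_comm _ _
  simp only [inner_cyclicLaplacian, cyclicDiff, norm_sub_sq_real, sum_sub_distrib, sum_add_distrib,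
    ← mul_sum, hshift, hcomm, Fin.sum_comp_add_one (‖v ·‖ ^ 2)]
  ring

end InnerProduct

section Flow

variable {n : ℕ} [NeZero n] {E : Type*} [NormedAddCommGroup E] [InnerProductSpace ℝ E]
  {z : ℝ → Fin n → E}

theorem hasDerivAt_cyclicDiff
    (hz : ∀ t i, HasDerivAt (fun s => z s i) (cyclicLaplacian (z t) i) t) (t : ℝ) (i : Fin n) :
    HasDerivAt (fun s => cyclicDiff (z s) i) (cyclicLaplacian (cyclicDiff (z t)) i) t := by
  rw [← cyclicDiff_cyclicLaplacian]
  exact (hz t (i + 1)).sub (hz t i)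

theorem exists_hasDerivAt_perimeter_neg
    (hz : ∀ t i, HasDerivAt (fun s => z s i) (cyclicLaplacian (z t) i) t) {t : ℝ}
    (hv : ∀ i, cyclicDiff (z t) i ≠ 0) :
    ∃ d < 0, HasDerivAt (fun s => perimeter (z s)) d t :=
  ⟨_, sum_inner_cyclicLaplacian_div_norm_neg hv (sum_cyclicDiff _),
    HasDerivAt.fun_sum fun i _ => (hasDerivAt_cyclicDiff hz t i).norm (hv i)⟩

theorem tendsto_perimeter_atTop
    (hz : ∀ t i, HasDerivAt (fun s => z s i) (cyclicLaplacian (z t) i) t) :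
    Tendsto (fun t => perimeter (z t)) atTop (𝓝 0) := by
  set Q : ℝ → ℝ := fun t => ∑ i, ‖cyclicDiff (z t) i‖ ^ 2
  have hQ : ∀ t, HasDerivAt Q (-∑ i, ‖cyclicDiff (cyclicDiff (z t)) i‖ ^ 2) t := fun t =>
    (HasDerivAt.fun_sum fun i _ => (hasDerivAt_cyclicDiff hz t i).norm_sq).congr_deriv
      (by rw [← mul_sum, sum_inner_cyclicLaplacian]; ring)
  have hn : (0 : ℝ) < n := by exact_mod_cast Nat.pos_of_neZero n
  have hQ_le : ∀ t, -∑ i, ‖cyclicDiff (cyclicDiff (z t)) i‖ ^ 2 ≤ -((n : ℝ) ^ 2)⁻¹ * Q t := by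
    intro t
    rw [neg_mul, neg_le_neg_iff, inv_mul_le_iff₀ (by positivity)]
    exact sum_norm_sq_le_of_sum_eq_zero (sum_cyclicDiff (z t))
  have hQ_lim : Tendsto Q atTop (𝓝 0) :=
    tendsto_zero_of_hasDerivAt_le_neg_mul hQ hQ_le (by positivity)
      fun t => sum_nonneg fun i _ => by positivity
  have hedge : ∀ i, Tendsto (fun t => ‖cyclicDiff (z t) i‖) atTop (𝓝 0) := fun i =>
    squeeze_zero (fun _ => norm_nonneg _)
      (fun t => (Real.le_sqrt (norm_nonneg _) (sum_nonneg fun i _ => by positivity)).mpr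
        (single_le_sum (f := fun i => ‖cyclicDiff (z t) i‖ ^ 2) (fun i _ => by positivity)
          (mem_univ i)))
      (by simpa using hQ_lim.sqrt)
  simpa [perimeter] using tendsto_finsetSum univ fun i _ => hedge i

end Flow

theorem LinearFlow.hasDerivAt_cyclicLaplacian {n : ℕ} [NeZero n] {z : ℝ → Fin n → ℂ}
    (hz : LinearFlow n z) (t : ℝ) (i : Fin n) :
    HasDerivAt (fun s => z s i) (cyclicLaplacian (z t) i) t := by
  convert hz t i using 1
  simp [cyclicLaplacian, Complex.real_smul]

theorem perimeter_decreases_general (n : ℕ) [NeZero n]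
    (z : ℝ → Fin n → ℂ) (hz : LinearFlow n z)
    (hadj : ∀ (t : ℝ) (i : Fin n), z t (i + 1) ≠ z t i) :
    (∀ t : ℝ, ∃ d : ℝ, d < 0 ∧
      HasDerivAt (fun s => ∑ i : Fin n, ‖z s (i + 1) - z s i‖) d t) ∧
    StrictAnti (fun t : ℝ => ∑ i : Fin n, ‖z t (i + 1) - z t i‖) ∧
    Filter.Tendsto (fun t : ℝ => ∑ i : Fin n, ‖z t (i + 1) - z t i‖)
      Filter.atTop (nhds 0) := by
  have hflow := hz.hasDerivAt_cyclicLaplacian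
  have hderiv : ∀ t, ∃ d < 0, HasDerivAt (fun s => perimeter (z s)) d t := fun t =>
    exists_hasDerivAt_perimeter_neg hflow fun i => sub_ne_zero.mpr (hadj t i)
  choose d hd_neg hd using hderiv
  exact ⟨fun t => ⟨d t, hd_neg t, hd t⟩, strictAnti_of_hasDerivAt_neg hd hd_neg,
    tendsto_perimeter_atTop hflow⟩

/-- Under the linear polygon shortening flow with adjacent vertices remaining distinct,
the perimeter `P(t) = ∑ |z_{i+1} - z_i|` has strictly negative derivative at every time,
is strictly monotonically decreasing, and tends to `0` as `t → ∞`. -/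
theorem perimeter_decreases (n : ℕ) [NeZero n] (hn : 2 ≤ n)
    (z : ℝ → Fin n → ℂ) (hz : LinearFlow n z)
    (hadj : ∀ (t : ℝ) (i : Fin n), z t (i + 1) ≠ z t i) :
    (∀ t : ℝ, ∃ d : ℝ, d < 0 ∧
      HasDerivAt (fun s => ∑ i : Fin n, ‖z s (i + 1) - z s i‖) d t) ∧
    StrictAnti (fun t : ℝ => ∑ i : Fin n, ‖z t (i + 1) - z t i‖) ∧
    Filter.Tendsto (fun t : ℝ => ∑ i : Fin n, ‖z t (i + 1) - z t i‖)
      Filter.atTop (nhds 0) :=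
  perimeter_decreases_general n z hz hadj
end
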